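/- Let H be a normal subgroup of π₁(X, x₀) and let X be a locally path-connected space that is H-SLT at x₀. Then H is a closed subgroup of π₁^qtop(X, x₀) if and only if H is a closed subgroup of π₁^wh(X, x₀). -/

import Mathlib

open Set TopologicalSpace unitInterval

universe u

namespace SLTF

attribute [local instance] Path.Homotopic.setoid

variable {X : Type u} [TopologicalSpace X]

/-- The homotopy class of a loop as an element of the fundamental group. -/
noncomputable def fl {x : X} (γ : Path x x) : FundamentalGroup X x :=
  @FundamentalGroup.fromPath X _ x ⟦γ⟧

/-- Multiplication of fundamental-group elements in path-concatenation order: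
`pmul a b` is the class of "`a` followed by `b`". -/
noncomputable def pmul {x : X} (a b : FundamentalGroup X x) : FundamentalGroup X x :=
  @FundamentalGroup.fromPath X _ x
    (Path.Homotopic.Quotient.trans (@FundamentalGroup.toPath X _ x a)
      (@FundamentalGroup.toPath X _ x b))

/-- A path in `X` starting at the base point `x`, recorded together with its end point. -/
structure PPath (X : Type u) [TopologicalSpace X] (x : X) where
  target : X
  path : Path x target

/-- Two paths starting at `x` are identified when they have the same end point and the
class of `α ⬝ β⁻¹` satisfies the predicate `P` (e.g. membership in a subgroup `H`). -/
def HRel (x : X) (P : Path x x → Prop) (α β : PPath X x) : Prop :=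
  ∃ h : α.target = β.target, P (α.path.trans ((β.path.cast rfl h).symm))

/-- The set `X̃` of `P`-equivalence classes of paths starting at `x`. -/
def Xtilde (x : X) (P : Path x x → Prop) : Type u := Quot (HRel x P)

/-- The class of a path in `X̃`. -/
def mkX (x : X) (P : Path x x → Prop) (α : PPath X x) : Xtilde x P := Quot.mk _ α

/-- The basic whisker-open set `([α], U)`: all classes of prolongations of `α` by a path in `U`. -/
def whBasic (x : X) (P : Path x x → Prop) (α : PPath X x) (U : Set X) : Set (Xtilde x P) :=
  { q | ∃ (y : X) (β : Path α.target y), range ⇑β ⊆ U ∧ q = mkX x P ⟨y, α.path.trans β⟩ }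

/-- The whisker topology on `X̃`, generated by the sets `([α], U)` for `U` an open
neighbourhood of the end point of `α`. -/
instance whTop (x : X) (P : Path x x → Prop) : TopologicalSpace (Xtilde x P) :=
  generateFrom
    { S | ∃ (α : PPath X x) (U : Set X), IsOpen U ∧ α.target ∈ U ∧ S = whBasic x P α U }

/-- The endpoint projection `p : X̃ → X`. -/
def endpt (x : X) (P : Path x x → Prop) : Xtilde x P → X :=
  Quot.lift (fun α => α.target) (fun _ _ h => h.elim fun e _ => e)

/-- The space of paths in `X` starting at `x`, with the compact-open topology. -/
def PSp (X : Type u) [TopologicalSpace X] (x : X) : Type u := { f : C(I, X) // f 0 = x }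

instance (x : X) : TopologicalSpace (PSp X x) := instTopologicalSpaceSubtype

/-- The natural surjection from the path space onto `X̃`. -/
def toXt (x : X) (P : Path x x → Prop) : PSp X x → Xtilde x P :=
  fun f => mkX x P ⟨f.1 1, ⟨f.1, f.2, rfl⟩⟩

/-- The quotient of the compact-open topology on `X̃`. -/
def topTop (x : X) (P : Path x x → Prop) : TopologicalSpace (Xtilde x P) :=
  coinduced (toXt x P) inferInstance

/-- Membership in a subgroup `H`, as a predicate on loops. -/
noncomputable def loopMem (x : X) (H : Subgroup (FundamentalGroup X x)) : Path x x → Prop :=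
  fun γ => fl γ ∈ H

/-- `X̃_H`, the classes of paths starting at `x₀` modulo `H`. -/
abbrev XtildeH (x₀ : X) (H : Subgroup (FundamentalGroup X x₀)) : Type u :=
  Xtilde x₀ (loopMem x₀ H)

/-- The fiber of the endpoint projection over `y`, with the subspace (whisker) topology. -/
abbrev Fib (x : X) (P : Path x x → Prop) (y : X) : Type u :=
  { q : Xtilde x P // endpt x P q = y }

/-- The class in the fiber over `y` of a path from `x` to `y`. -/
def mkFib (x : X) (P : Path x x → Prop) {y : X} (δ : Path x y) : Fib x P y :=
  ⟨mkX x P ⟨y, δ⟩, rfl⟩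

/-- The whisker topology on the fundamental group `π₁(X, x)`: basic neighbourhoods of `a`
are the sets `{a ⋆ [γ] : γ a loop in U at x}` for `U` an open neighbourhood of `x`. -/
noncomputable def whPi1 (x : X) : TopologicalSpace (FundamentalGroup X x) :=
  generateFrom
    { S | ∃ (a : FundamentalGroup X x) (U : Set X), IsOpen U ∧ x ∈ U ∧
        S = { b | ∃ γ : Path x x, range ⇑γ ⊆ U ∧ b = pmul a (fl γ) } }

/-- The quotient topology on `π₁(X, x)` induced from the loop space with the
compact-open topology. -/
noncomputable def qtopPi1 (x : X) : TopologicalSpace (FundamentalGroup X x) :=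
  coinduced (fun γ : Path x x => fl γ) inferInstance

/-- `X` is `H`-SLT at `x₀`. -/
noncomputable def IsHSLTAt (x₀ : X) (H : Subgroup (FundamentalGroup X x₀)) : Prop :=
  ∀ (y : X) (α : Path x₀ y) (U : Set X), IsOpen U → x₀ ∈ U →
    ∃ V : Set X, IsOpen V ∧ y ∈ V ∧
      ∀ β : Path y y, range ⇑β ⊆ V →
        ∃ γ : Path x₀ x₀, range ⇑γ ⊆ U ∧
          fl ((α.trans (β.trans α.symm)).trans γ.symm) ∈ H

/-- `X` is SLT at `x`. -/
def IsSLTAt (X : Type u) [TopologicalSpace X] (x : X) : Prop :=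
  ∀ (y : X) (α : Path x y) (U : Set X), IsOpen U → x ∈ U →
    ∃ V : Set X, IsOpen V ∧ y ∈ V ∧
      ∀ β : Path y y, range ⇑β ⊆ V →
        ∃ γ : Path x x, range ⇑γ ⊆ U ∧ (α.trans (β.trans α.symm)).Homotopic γ

/-- `X` is an SLT space. -/
def IsSLT (X : Type u) [TopologicalSpace X] : Prop := ∀ x : X, IsSLTAt X x

/-- `α` (a path from `x` to `y`) is an `H`-SLT path: for every path `lam` from `x₀` to `x`
and open `U ∋ x` there is an open `V ∋ y` such that every loop `β` in `V` at `y` transfers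
to a loop `γ` in `U` at `x` with `[α ⋆ β ⋆ α⁻¹ ⋆ γ⁻¹] ∈ [lam⁻¹ H lam]`, i.e.
`[lam ⋆ (α ⋆ β ⋆ α⁻¹ ⋆ γ⁻¹) ⋆ lam⁻¹] ∈ H`. -/
noncomputable def IsHSLTPath (x₀ : X) (H : Subgroup (FundamentalGroup X x₀)) {x y : X}
    (α : Path x y) : Prop :=
  ∀ (lam : Path x₀ x) (U : Set X), IsOpen U → x ∈ U →
    ∃ V : Set X, IsOpen V ∧ y ∈ V ∧
      ∀ β : Path y y, range ⇑β ⊆ V →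
        ∃ γ : Path x x, range ⇑γ ⊆ U ∧
          fl (lam.trans ((((α.trans (β.trans α.symm)).trans γ.symm)).trans lam.symm)) ∈ H

/-- `X` is an `H`-SLT space: for every `x` and every path `lam` from `x₀` to `x`, `X` is
`[lam⁻¹ H lam]`-SLT at `x`. -/
noncomputable def IsHSLTSpace (x₀ : X) (H : Subgroup (FundamentalGroup X x₀)) : Prop :=
  ∀ (x y : X) (α : Path x y), IsHSLTPath x₀ H α

/-- Membership in the conjugate subgroup `[lam⁻¹ H lam]` of `π₁(X, x)`,
as a predicate on loops at `x`. -/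
noncomputable def conjMem (x₀ : X) (H : Subgroup (FundamentalGroup X x₀)) {x : X}
    (lam : Path x₀ x) : Path x x → Prop :=
  fun δ => fl (lam.trans (δ.trans lam.symm)) ∈ H

/-- `X` is homotopically Hausdorff relative to `H`. -/
noncomputable def HomHausdorffRel (x₀ : X) (H : Subgroup (FundamentalGroup X x₀)) : Prop :=
  ∀ (y : X) (α : Path x₀ y) (g : FundamentalGroup X x₀), g ∉ H →
    ∃ U : Set X, IsOpen U ∧ y ∈ U ∧
      ∀ γ : Path y y, range ⇑γ ⊆ U →
        ¬ ∃ h ∈ H, fl (α.trans (γ.trans α.symm)) = pmul h g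

/-- `X` is homotopically path Hausdorff relative to `H`. -/
noncomputable def HomPathHausdorffRel (x₀ : X) (H : Subgroup (FundamentalGroup X x₀)) : Prop :=
  ∀ (y : X) (α β : Path x₀ y), fl (α.trans β.symm) ∉ H →
    ∃ (n : ℕ) (t : Fin (n + 1) → I) (U : Fin n → Set X),
      t 0 = 0 ∧ t (Fin.last n) = 1 ∧ StrictMono t ∧
      (∀ i : Fin n, IsOpen (U i)) ∧
      (∀ i : Fin n, ⇑α '' Set.Icc (t i.castSucc) (t i.succ) ⊆ U i) ∧
      ∀ γ : Path x₀ y,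
        (∀ i : Fin n, ⇑γ '' Set.Icc (t i.castSucc) (t i.succ) ⊆ U i) →
        (∀ i : Fin (n + 1), γ (t i) = α (t i)) →
        fl (γ.trans β.symm) ∉ H

/-- The endpoint projection `p : X̃ → X` (with the whisker topology on `X̃`) has the
unique path lifting property. -/
def UPLP (x : X) (P : Path x x → Prop) : Prop :=
  ∀ g₁ g₂ : C(I, Xtilde x P), g₁ 0 = g₂ 0 →
    (∀ t, endpt x P (g₁ t) = endpt x P (g₂ t)) → g₁ = g₂

/-- A semicovering map: a local homeomorphism with (continuous) unique lifting of paths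
and of homotopies. -/
structure IsSemicovering {Y : Type u} [TopologicalSpace Y] (p : Y → X) : Prop where
  localHomeo : IsLocalHomeomorph p
  pathLift : ∀ (y : Y) (γ : C(I, X)), γ 0 = p y →
    ∃! γh : C(I, Y), γh 0 = y ∧ ∀ t, p (γh t) = γ t
  contPathLift : ∀ y : Y, ∃ L : { γ : C(I, X) // γ 0 = p y } → C(I, Y),
    Continuous L ∧ ∀ γ, (L γ) 0 = y ∧ ∀ t, p ((L γ) t) = (γ : C(I, X)) t
  homotopyLift : ∀ (y : Y) (Φ : C(I × I, X)), Φ (0, 0) = p y →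
    ∃! Φh : C(I × I, Y), Φh (0, 0) = y ∧ ∀ z, p (Φh z) = Φ z
  contHomotopyLift : ∀ y : Y, ∃ L : { Φ : C(I × I, X) // Φ (0, 0) = p y } → C(I × I, Y),
    Continuous L ∧ ∀ Φ, (L Φ) (0, 0) = y ∧ ∀ z, p ((L Φ) z) = (Φ : C(I × I, X)) z

/-- An `lpc₀`-covering map with `p₊π₁(Y, ·) = H`: a map which is equivalent, as a map
over `X`, to the endpoint projection `p_H : X̃_H → X` having the unique path lifting
property (with `Y` path connected and locally path connected). -/
structure IsLpc0Covering {Y : Type u} [TopologicalSpace Y] (p : Y → X) (x₀ : X)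
    (H : Subgroup (FundamentalGroup X x₀)) : Prop where
  pathConnected : PathConnectedSpace Y
  locPathConnected : LocPathConnectedSpace Y
  uplp : UPLP x₀ (loopMem x₀ H)
  equiv : ∃ φ : Y ≃ₜ XtildeH x₀ H, ∀ y, endpt x₀ (loopMem x₀ H) (φ y) = p y

/-- The homomorphism induced by `p` on fundamental groups, as a function. -/
noncomputable def pStar {Y : Type u} [TopologicalSpace Y] (p : C(Y, X)) (y₀ : Y) :
    FundamentalGroup Y y₀ → FundamentalGroup X (p y₀) :=
  fun g => @FundamentalGroup.fromPath X _ (p y₀)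
    (Path.Homotopic.Quotient.map (@FundamentalGroup.toPath Y _ y₀ g) p)

/-!
Every compact-open neighbourhood of `α ⋆ const` contains all `α ⋆ γ` with `γ` a loop in a small
neighbourhood of `x₀`, so the whisker topology on `π₁(X, x₀)` is finer than the quotient
topology, and qtop-closed subgroups are wh-closed.

Conversely, let `[α] ∉ H` and let `U ∋ x₀` be such that `[α ⋆ γ] ∉ H` for all loops `γ` in `U`.
Put `K = ⟨π₁(U, x₀), H⟩`; as `H` is normal, `K = π₁(U, x₀) · H`, so `[α] ∉ K`. The `H`-SLT
property says that small loops at any point `α τ`, conjugated back along `α|[0, τ]`, lie in `K`.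
Subdivide `α` finely, and for `β` in a compact-open neighbourhood of `α` join `β (t k)` to
`α (t k)` by short paths: this writes `[β ⋆ α⁻¹]` as a product of such conjugates, so
`[β ⋆ α⁻¹] ∈ K` and `[β] ∉ H`.
-/

open CategoryTheory Filter Topology

lemma exists_monotone_tagged_partition_unitInterval {c : I → Set I} (hc : ∀ τ, c τ ∈ 𝓝 τ) :
    ∃ t : ℕ → I, t 0 = 0 ∧ Monotone t ∧ (∃ n, ∀ m ≥ n, t m = 1) ∧
      ∀ k, ∃ τ, Icc (t k) (t (k + 1)) ⊆ c τ ∧ uIcc (t k) τ ⊆ c τ := by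
  choose ε hε hεc using fun τ => Metric.mem_nhds_iff.1 (hc τ)
  have hconn : ∀ τ, (Metric.ball τ (ε τ)).OrdConnected := fun τ => by
    have : Metric.ball τ (ε τ) = Subtype.val ⁻¹' Metric.ball (τ : ℝ) (ε τ) := rfl
    rw [this, Real.ball_eq_Ioo]
    exact ordConnected_Ioo.preimage_mono (Subtype.mono_coe _)
  obtain ⟨t, ht0, ht, hn, hcover⟩ := exists_monotone_Icc_subset_open_cover_unitInterval
    (c := fun τ => Metric.ball τ (ε τ)) (fun _ => Metric.isOpen_ball)
    (fun τ _ => mem_iUnion.2 ⟨τ, Metric.mem_ball_self (hε τ)⟩)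
  refine ⟨t, ht0, ht, hn, fun k => ?_⟩
  obtain ⟨τ, hτ⟩ := hcover k
  exact ⟨τ, hτ.trans (hεc τ), ((hconn τ).uIcc_subset (hτ (left_mem_Icc.2 (ht k.le_succ)))
    (Metric.mem_ball_self (hε τ))).trans (hεc τ)⟩

lemma exists_forall_range_subset_of_mem_nhds_refl {x : X} {N : Set (Path x x)}
    (hN : N ∈ 𝓝 (Path.refl x)) :
    ∃ U, IsOpen U ∧ x ∈ U ∧ ∀ γ : Path x x, range γ ⊆ U → γ ∈ N := by
  rw [nhds_induced, mem_comap] at hN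
  obtain ⟨M, hM, hMN⟩ := hN
  obtain ⟨⟨K, U⟩, ⟨-, hxU, hU⟩, hUM⟩ := (nhds_basis_opens x).nhds_continuousMapConst.mem_iff.1 hM
  exact ⟨U, hU, hxU, fun γ hγ => hMN <| hUM fun s _ => hγ (mem_range_self s)⟩

def arrow {a b : X} (p : Path a b) : FundamentalGroupoid.mk a ⟶ FundamentalGroupoid.mk b :=
  ⟦p⟧

lemma arrow_trans {a b c : X} (p : Path a b) (q : Path b c) :
    arrow (p.trans q) = arrow p ≫ arrow q := rfl

lemma arrow_symm {a b : X} (p : Path a b) : arrow p.symm = inv (arrow p) := by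
  rw [← Groupoid.inv_eq_inv]; rfl

lemma arrow_refl (a : X) : arrow (Path.refl a) = 𝟙 _ := rfl

lemma fl_trans {x : X} (γ δ : Path x x) : fl (γ.trans δ) = fl δ * fl γ := rfl

lemma fl_symm {x : X} (γ : Path x x) : fl γ.symm = (fl γ)⁻¹ := rfl

lemma fl_eq_of_homotopic {x : X} {γ δ : Path x x} (h : γ.Homotopic δ) : fl γ = fl δ :=
  Quotient.sound h

lemma pmul_eq_mul {x : X} (a b : FundamentalGroup X x) : pmul a b = b * a := rfl

def initialSubpath {a b : X} (γ : Path a b) (t : I) : Path a (γ t) :=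
  (γ.subpath 0 t).cast γ.source.symm rfl

lemma initialSubpath_zero {a b : X} (γ : Path a b) :
    initialSubpath γ 0 = (Path.refl a).cast rfl γ.source := by
  ext s; simp [initialSubpath, Path.subpath]

lemma initialSubpath_one {a b : X} (γ : Path a b) :
    initialSubpath γ 1 = γ.cast rfl γ.target := by
  ext s; simp [initialSubpath]

lemma initialSubpath_trans_subpath {a b : X} (γ : Path a b) (s t : I) :
    ((initialSubpath γ s).trans (γ.subpath s t)).Homotopic (initialSubpath γ t) :=
  Path.Homotopic.pathCast ⟨Path.Homotopy.subpathTransSubpath γ 0 s t⟩ γ.source.symm rfl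

def TransportsInto {x y : X} (K : Subgroup (FundamentalGroup X x)) (p : Path x y) (V : Set X) :
    Prop :=
  ∀ ℓ : Path y y, range ℓ ⊆ V → fl (p.trans (ℓ.trans p.symm)) ∈ K

namespace TransportsInto

variable {x y z : X} {K : Subgroup (FundamentalGroup X x)} {V : Set X}

lemma of_homotopic {p p' : Path x y} (h : TransportsInto K p V) (hp : p.Homotopic p') :
    TransportsInto K p' V := by
  intro ℓ hℓ
  have hp' : arrow p = arrow p' := Quotient.sound hp
  have := h ℓ hℓ
  change arrow _ ∈ K at this ⊢
  simpa only [arrow_trans, arrow_symm, hp'] using this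

lemma of_trans {p : Path x y} {q : Path y z} (h : TransportsInto K (p.trans q) V)
    (hq : range q ⊆ V) : TransportsInto K p V := by
  intro ℓ hℓ
  have := h (q.symm.trans (ℓ.trans q)) (by simp [Path.trans_range, hq, hℓ])
  change arrow _ ∈ K at this ⊢
  simpa only [arrow_trans, arrow_symm, IsIso.inv_comp, Category.assoc, IsIso.inv_inv,
    IsIso.hom_inv_id_assoc, IsIso.hom_inv_id, Category.comp_id] using this

lemma initialSubpath_of_mapsTo {b : X} {γ : Path x b} {r τ : I}
    (h : TransportsInto K (initialSubpath γ τ) V) (hγ : MapsTo γ (uIcc r τ) V) :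
    TransportsInto K (initialSubpath γ r) V :=
  (h.of_homotopic (initialSubpath_trans_subpath γ r τ).symm).of_trans
    (by rw [Path.range_subpath]; exact hγ.image_subset)

lemma fl_mem {h : y = x} (hT : TransportsInto K ((Path.refl x).cast rfl h) V) {ℓ : Path x x}
    (hℓ : range ℓ ⊆ V) : fl ℓ ∈ K := by
  subst h
  have := hT ℓ hℓ
  change arrow _ ∈ K at this ⊢
  simpa only [Path.cast_rfl_rfl, arrow_trans, arrow_symm, arrow_refl, IsIso.inv_id,
    Category.id_comp, Category.comp_id] using this

end TransportsInto

/-- Prolonging `A` by `q` and `B` by `ρ` multiplies the class of `B ⋆ η ⋆ A⁻¹` by the conjugate,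
along `A`, of the small loop `η⁻¹ ⋆ ρ ⋆ η' ⋆ q⁻¹`. -/
lemma fl_telescope {x a b a' b' : X} {A : Path x a} {B : Path x b} {A' : Path x a'}
    {B' : Path x b'} {q : Path a a'} {ρ : Path b b'} (hA : (A.trans q).Homotopic A')
    (hB : (B.trans ρ).Homotopic B') (η : Path b a) (η' : Path b' a') :
    fl (B'.trans (η'.trans A'.symm)) =
      fl (A.trans ((η.symm.trans (ρ.trans (η'.trans q.symm))).trans A.symm)) *
        fl (B.trans (η.trans A.symm)) := by
  have hA' : arrow A' = arrow A ≫ arrow q := (Quotient.sound hA).symm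
  have hB' : arrow B' = arrow B ≫ arrow ρ := (Quotient.sound hB).symm
  change arrow _ = arrow _ ≫ arrow _
  simp only [arrow_trans, arrow_symm, hA', hB']
  simp

theorem fl_trans_symm_mem_of_chain {x y : X} {K : Subgroup (FundamentalGroup X x)}
    {α β : Path x y} {t : ℕ → I} {n : ℕ} (ht : Monotone t) (ht0 : t 0 = 0) (htn : t n = 1)
    {W Q : ℕ → Set X} (hQ : ∀ k, IsPathConnected (Q k)) (hQW : ∀ k, Q k ⊆ W k)
    (hQW' : ∀ k, Q (k + 1) ⊆ W k) (hαQ : ∀ k, α (t k) ∈ Q k)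
    (hαW : ∀ k, MapsTo α (Icc (t k) (t (k + 1))) (W k))
    (hαK : ∀ k, TransportsInto K (initialSubpath α (t k)) (W k))
    (hβQ : ∀ k ≤ n, β (t k) ∈ Q k) (hβW : ∀ k < n, MapsTo β (Icc (t k) (t (k + 1))) (W k)) :
    fl (β.trans α.symm) ∈ K := by
  -- `η` joins `β (t k)` to `α (t k)` inside `Q k`; the last one is constant, as `t n = 1`.
  suffices claim : ∀ k ≤ n, ∀ η : Path (β (t k)) (α (t k)), range η ⊆ Q k →
      fl ((initialSubpath β (t k)).trans (η.trans (initialSubpath α (t k)).symm)) ∈ K by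
    have hend := claim n le_rfl
    have hy := hαQ n
    rw [htn] at hend hy
    rw [α.target] at hy
    have := hend ((Path.refl y).cast β.target α.target) (by simpa using hy)
    rw [initialSubpath_one, initialSubpath_one] at this
    rw [← fl_eq_of_homotopic ((Path.Homotopic.refl β).hcomp ⟨Path.Homotopy.reflTrans α.symm⟩)]
    exact this
  intro k
  induction k with
  | zero =>
    intro _
    have hT := hαK 0
    have hx := hαQ 0
    rw [ht0] at hT hx ⊢
    rw [α.source] at hx
    rw [initialSubpath_zero] at hT
    intro η hη
    rw [initialSubpath_zero, initialSubpath_zero]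
    refine hT.fl_mem ?_
    simpa [Path.trans_range] using insert_subset (hQW 0 hx) (hη.trans (hQW 0))
  | succ k ih =>
    intro hk η' hη'
    obtain ⟨η, hη⟩ := (hQ k).joinedIn _ (hβQ k (by omega)) _ (hαQ k)
    have hL : range (η.symm.trans ((β.subpath (t k) (t (k + 1))).trans
        (η'.trans (α.subpath (t k) (t (k + 1))).symm))) ⊆ W k := by
      simp only [Path.trans_range, Path.symm_range, Path.range_subpath, uIcc_of_le (ht k.le_succ)]
      exact union_subset (range_subset_iff.2 fun s => hQW k (hη s))
        (union_subset ((hβW k (by omega)).image_subset)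
          (union_subset (hη'.trans (hQW' k)) (hαW k).image_subset))
    rw [fl_telescope (initialSubpath_trans_subpath α _ _) (initialSubpath_trans_subpath β _ _)
      η η']
    exact K.mul_mem (hαK k _ hL) (ih (by omega) _ (range_subset_iff.2 hη))

theorem eventually_fl_trans_symm_mem [LocallyPathConnectedSpace X] {x y : X}
    (K : Subgroup (FundamentalGroup X x)) (α : Path x y)
    (h : ∀ τ, ∃ V, IsOpen V ∧ α τ ∈ V ∧ TransportsInto K (initialSubpath α τ) V) :
    ∀ᶠ β in 𝓝 α, fl (β.trans α.symm) ∈ K := by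
  choose V hVo hVα hVK using h
  obtain ⟨t, ht0, ht, ⟨n, hn⟩, htag⟩ := exists_monotone_tagged_partition_unitInterval
    fun τ => (hVo τ).preimage α.continuous |>.mem_nhds (hVα τ)
  choose τ hτ hτt using htag
  have hαW (k : ℕ) : MapsTo α (Icc (t k) (t (k + 1))) (V (τ k)) := hτ k
  have hαK (k : ℕ) : TransportsInto K (initialSubpath α (t k)) (V (τ k)) :=
    (hVK (τ k)).initialSubpath_of_mapsTo (hτt k)
  have hjunction (k : ℕ) : ∃ Q, IsOpen Q ∧ α (t k) ∈ Q ∧ IsPathConnected Q ∧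
      Q ⊆ V (τ k) ∩ V (τ (k - 1)) := by
    have hprev : α (t k) ∈ V (τ (k - 1)) := by
      cases k with
      | zero => exact hαW 0 (left_mem_Icc.2 (ht (Nat.zero_le 1)))
      | succ k => exact hαW k (right_mem_Icc.2 (ht k.le_succ))
    obtain ⟨Q, ⟨hQo, hαQ, hQ⟩, hQV⟩ := (isOpen_isPathConnected_basis (α (t k))).mem_iff.1 <|
      ((hVo _).inter (hVo _)).mem_nhds ⟨hαW k (left_mem_Icc.2 (ht k.le_succ)), hprev⟩
    exact ⟨Q, hQo, hαQ, hQ, hQV⟩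
  choose Q hQo hαQ hQ hQV using hjunction
  have hβW : ∀ᶠ β in 𝓝 α, ∀ k ∈ Iio n, MapsTo (β : Path x y) (Icc (t k) (t (k + 1))) (V (τ k)) :=
    (eventually_all_finite (finite_Iio n)).2 fun k _ =>
      (continuous_induced_dom.tendsto α).eventually
        (ContinuousMap.eventually_mapsTo isCompact_Icc (hVo _) (hαW k))
  have hβQ : ∀ᶠ β in 𝓝 α, ∀ k ∈ Iic n, (β : Path x y) (t k) ∈ Q k :=
    (eventually_all_finite (finite_Iic n)).2 fun k _ =>
      (continuous_eval_const (t k)).continuousAt.eventually ((hQo k).mem_nhds (hαQ k))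
  filter_upwards [hβW, hβQ] with β hβW hβQ
  exact fl_trans_symm_mem_of_chain ht ht0 (hn n le_rfl) hQ
    (fun k => (hQV k).trans inter_subset_left) (fun k => (hQV (k + 1)).trans inter_subset_right)
    hαQ hαW hαK hβQ hβW

def loopSubgroup (U : Set X) {x : X} (hx : x ∈ U) : Subgroup (FundamentalGroup X x) where
  carrier := {a | ∃ γ : Path x x, range γ ⊆ U ∧ fl γ = a}
  mul_mem' := by
    rintro _ _ ⟨γ, hγ, rfl⟩ ⟨δ, hδ, rfl⟩
    exact ⟨δ.trans γ, by simp [Path.trans_range, hγ, hδ], rfl⟩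
  one_mem' := ⟨Path.refl x, by simpa using hx, rfl⟩
  inv_mem' := by
    rintro _ ⟨γ, hγ, rfl⟩
    exact ⟨γ.symm, by simpa using hγ, rfl⟩

lemma exists_pmul_mem_of_mem_loopSubgroup_sup {U : Set X} {x : X} (hx : x ∈ U)
    {H : Subgroup (FundamentalGroup X x)} (hH : H.Normal) {a : FundamentalGroup X x}
    (ha : a ∈ loopSubgroup U hx ⊔ H) : ∃ γ : Path x x, range γ ⊆ U ∧ pmul a (fl γ) ∈ H := by
  rw [← SetLike.mem_coe, Subgroup.mul_normal] at ha
  obtain ⟨_, ⟨γ, hγ, rfl⟩, h, hh, rfl⟩ := ha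
  exact ⟨γ.symm, by simpa using hγ, by rwa [pmul_eq_mul, fl_symm, inv_mul_cancel_left]⟩

lemma IsHSLTAt.transportsInto {x₀ y : X} {H : Subgroup (FundamentalGroup X x₀)}
    (hslt : IsHSLTAt x₀ H) (p : Path x₀ y) {U : Set X} (hU : IsOpen U) (hx : x₀ ∈ U) :
    ∃ V, IsOpen V ∧ y ∈ V ∧ TransportsInto (loopSubgroup U hx ⊔ H) p V := by
  obtain ⟨V, hV, hyV, htransfer⟩ := hslt y p U hU hx
  refine ⟨V, hV, hyV, fun ℓ hℓ => ?_⟩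
  obtain ⟨γ, hγ, hH⟩ := htransfer ℓ hℓ
  rw [fl_trans, fl_symm] at hH
  have := mul_mem (Subgroup.mem_sup_left (show fl γ ∈ loopSubgroup U hx from ⟨γ, hγ, rfl⟩))
    (Subgroup.mem_sup_right hH)
  rwa [mul_inv_cancel_left] at this

lemma isOpen_whPi1_iff {x : X} {S : Set (FundamentalGroup X x)} :
    IsOpen[whPi1 x] S ↔ ∀ a ∈ S, ∃ U, IsOpen U ∧ x ∈ U ∧
      ∀ γ : Path x x, range γ ⊆ U → pmul a (fl γ) ∈ S := by
  constructor
  · intro hS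
    induction hS with
    | basic S hS =>
      obtain ⟨b, U, hU, hxU, rfl⟩ := hS
      rintro _ ⟨δ, hδ, rfl⟩
      refine ⟨U, hU, hxU, fun γ hγ => ⟨δ.trans γ, ?_, ?_⟩⟩
      · simp [Path.trans_range, hδ, hγ]
      · simp only [pmul_eq_mul, fl_trans, mul_assoc]
    | univ => exact fun _ _ => ⟨univ, isOpen_univ, mem_univ x, fun _ _ => mem_univ _⟩
    | inter S T _ _ hS hT =>
      rintro a ⟨haS, haT⟩
      obtain ⟨U, hU, hxU, hUS⟩ := hS a haS
      obtain ⟨U', hU', hxU', hUT⟩ := hT a haT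
      exact ⟨U ∩ U', hU.inter hU', ⟨hxU, hxU'⟩, fun γ hγ =>
        ⟨hUS γ (hγ.trans inter_subset_left), hUT γ (hγ.trans inter_subset_right)⟩⟩
    | sUnion F _ hF =>
      rintro a ⟨S, hSF, haS⟩
      obtain ⟨U, hU, hxU, hUS⟩ := hF S hSF a haS
      exact ⟨U, hU, hxU, fun γ hγ => ⟨S, hSF, hUS γ hγ⟩⟩
  · intro hS
    refine (@isOpen_iff_forall_mem_open _ (whPi1 x) S).2 fun a ha => ?_
    obtain ⟨U, hU, hxU, hUS⟩ := hS a ha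
    refine ⟨{b | ∃ γ : Path x x, range γ ⊆ U ∧ b = pmul a (fl γ)}, ?_,
      TopologicalSpace.isOpen_generateFrom_of_mem ⟨a, U, hU, hxU, rfl⟩,
      Path.refl x, by simpa using hxU, (one_mul a).symm⟩
    rintro _ ⟨γ, hγ, rfl⟩
    exact hUS γ hγ

lemma whPi1_le_qtopPi1 (x : X) : whPi1 x ≤ qtopPi1 x := by
  intro S hS
  rw [isOpen_whPi1_iff]
  intro a ha
  obtain ⟨α, rfl⟩ := Path.Homotopic.Quotient.mk_surjective a
  have hO : IsOpen {γ : Path x x | fl (α.trans γ) ∈ S} :=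
    isOpen_coinduced.1 hS |>.preimage <| Path.continuous_trans.comp <|
      continuous_const.prodMk continuous_id
  obtain ⟨U, hU, hxU, hUO⟩ := exists_forall_range_subset_of_mem_nhds_refl <| hO.mem_nhds <|
    show fl (α.trans (Path.refl x)) ∈ S from
      (fl_eq_of_homotopic ⟨Path.Homotopy.transRefl α⟩).symm ▸ ha
  exact ⟨U, hU, hxU, hUO⟩

theorem isClosed_qtopPi1_of_isHSLTAt [LocallyPathConnectedSpace X] {x₀ : X}
    {H : Subgroup (FundamentalGroup X x₀)} (hH : H.Normal) (hslt : IsHSLTAt x₀ H)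
    (hwh : IsClosed[whPi1 x₀] (H : Set (FundamentalGroup X x₀))) :
    IsClosed[qtopPi1 x₀] (H : Set (FundamentalGroup X x₀)) := by
  rw [← @isOpen_compl_iff _ _ (qtopPi1 x₀)]
  change IsOpen {γ : Path x₀ x₀ | fl γ ∉ H}
  refine isOpen_iff_mem_nhds.2 fun α (hα : fl α ∉ H) => ?_
  obtain ⟨U, hU, hxU, hαU⟩ := isOpen_whPi1_iff.1 ((@isOpen_compl_iff _ _ (whPi1 x₀)).2 hwh) _ hα
  filter_upwards [eventually_fl_trans_symm_mem _ α fun τ => hslt.transportsInto _ hU hxU]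
    with β hβα hβH
  rw [fl_trans, fl_symm] at hβα
  have := mul_mem (Subgroup.mem_sup_right hβH) (inv_mem hβα)
  rw [mul_inv_rev, inv_inv, mul_inv_cancel_left] at this
  obtain ⟨γ, hγ, hαγ⟩ := exists_pmul_mem_of_mem_loopSubgroup_sup hxU hH this
  exact hαU γ hγ hαγ

theorem statement5_general {X : Type u} [TopologicalSpace X]
    [LocallyPathConnectedSpace X] (x₀ : X)
    (H : Subgroup (FundamentalGroup X x₀)) (hH : H.Normal) (hslt : IsHSLTAt x₀ H) :
    @IsClosed _ (qtopPi1 x₀) (H : Set (FundamentalGroup X x₀)) ↔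
      @IsClosed _ (whPi1 x₀) (H : Set (FundamentalGroup X x₀)) :=
  ⟨fun h => h.mono (whPi1_le_qtopPi1 x₀), isClosed_qtopPi1_of_isHSLTAt hH hslt⟩

/-- Let `H` be a normal subgroup of `π₁(X, x₀)` and let `X` be a locally
path-connected space which is `H`-SLT at `x₀`. Then `H` is a closed subgroup of
`π₁^qtop(X, x₀)` if and only if `H` is a closed subgroup of `π₁^wh(X, x₀)`. -/
theorem statement5 {X : Type u} [TopologicalSpace X] [PathConnectedSpace X]
    [LocallyPathConnectedSpace X] (x₀ : X)
    (H : Subgroup (FundamentalGroup X x₀)) (hH : H.Normal) (hslt : IsHSLTAt x₀ H) :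
    @IsClosed _ (qtopPi1 x₀) (H : Set (FundamentalGroup X x₀)) ↔
      @IsClosed _ (whPi1 x₀) (H : Set (FundamentalGroup X x₀)) :=
  statement5_general x₀ H hH hslt

end SLTF
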